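/- Let (N_m)_{m≥1} be independent random variables with N_m ~ Poisson(α_m), where α_m = (1/(π²m²)) log(R/δ) with 0 < δ < R. Suppose, conditional on the N_m, W = ∑_{m=1}^∞ m · S_m where S_m is a sum of N_m i.i.d. symmetric ±1 variables, all independent. Then E[e^{iβW}] = (R/δ)^{-β(2π-β)/(4π²)} for β ∈ [0, 2π). -/

import Mathlib

/-!
By independence, `E[e^{iβW}] = ∏_m E[cos(mβ)^{N_m}]`, which is the product in the statement.
Each factor is the Poisson generating function `E[c^N] = exp(α(c - 1))` at `c = cos(mβ)`, so
the product is the exponential of `(log(R/δ)/π²) ∑ (cos(mβ) - 1)/m²`. That series is the Fourier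
series of the Bernoulli polynomial `B₂(x) = x² - x + 1/6` at `x = β/2π`, minus `ζ(2) = π²/6`,
and sums to `-β(2π - β)/4`.
-/

open Real Nat

theorem tsum_poisson_mul_pow_eq_exp (a c : ℝ) :
    ∑' k : ℕ, (a ^ k * exp (-a) / k !) * c ^ k = exp (a * (c - 1)) := by
  have hterm (k : ℕ) : (a ^ k * exp (-a) / k !) * c ^ k = exp (-a) * ((a * c) ^ k / k !) := by
    ring
  rw [tsum_congr hterm, tsum_mul_left, (NormedSpace.expSeries_div_hasSum_exp (a * c)).tsum_eq,
    ← exp_eq_exp_ℝ, ← exp_add]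
  ring_nf

theorem Polynomial.bernoulli_two_map_eval (x : ℝ) :
    ((Polynomial.bernoulli 2).map (algebraMap ℚ ℝ)).eval x = x ^ 2 - x + 1 / 6 := by
  norm_num [Polynomial.bernoulli, Finset.sum_range_succ, bernoulli_two]
  ring

theorem hasSum_one_div_sq_mul_cos_sub_one {β : ℝ} (hβ0 : 0 ≤ β) (hβ2π : β ≤ 2 * π) :
    HasSum (fun n : ℕ => 1 / (n : ℝ) ^ 2 * (cos (n * β) - 1)) (-(β * (2 * π - β) / 4)) := by
  have hx : β / (2 * π) ∈ Set.Icc (0 : ℝ) 1 :=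
    ⟨by positivity, (div_le_one (by positivity)).mpr hβ2π⟩
  have hcos := hasSum_one_div_nat_pow_mul_cos one_ne_zero hx
  have hangle (n : ℕ) : 2 * π * n * (β / (2 * π)) = n * β := by field_simp
  simp only [mul_one, reduceAdd, Polynomial.bernoulli_two_map_eval, hangle] at hcos
  have hvalue : -(β * (2 * π - β) / 4)
      = (-1) ^ 2 * (2 * π) ^ 2 / 2 / (2 ! : ℝ) * ((β / (2 * π)) ^ 2 - β / (2 * π) + 1 / 6)
        - π ^ 2 / 6 := by
    norm_num [Nat.factorial]
    field_simp
    ring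
  rw [hvalue]
  exact (hcos.sub hasSum_zeta_two).congr_fun fun n => by ring

/-- Let `N_m ~ Poisson(α_m)` independent, with `α_m = (1/(π²m²)) log(R/δ)`, `0 < δ < R`,
and `W = ∑_m m·S_m`, where `S_m` is a sum of `N_m` i.i.d. symmetric `±1` variables, all
independent. Then `E[e^{iβW}] = (R/δ)^{-β(2π-β)/(4π²)}` for `β ∈ [0, 2π)`.
By independence the expectation factorizes over `m`, and the `m`-th factor is
`∑_k (α_m^k e^{-α_m}/k!)(cos(mβ))^k`. -/
theorem winding_char_fun (δ R β : ℝ) (hδ : 0 < δ) (hδR : δ < R)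
    (hβ0 : 0 ≤ β) (hβ2π : β < 2 * π) :
    ∏' m : ℕ+,
      (∑' k : ℕ,
        ((Real.log (R / δ) / (π ^ 2 * (m : ℝ) ^ 2)) ^ k *
          Real.exp (-(Real.log (R / δ) / (π ^ 2 * (m : ℝ) ^ 2))) / (Nat.factorial k)) *
        (Real.cos (m * β)) ^ k)
    = (R / δ) ^ (-(β * (2 * π - β) / (4 * π ^ 2))) := by
  set L := log (R / δ) with hL
  have hexponent : HasSum (fun m : ℕ+ => L / (π ^ 2 * (m : ℝ) ^ 2) * (cos (m * β) - 1))
      (-(L / π ^ 2 * (β * (2 * π - β) / 4))) := by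
    have hnat := (hasSum_one_div_sq_mul_cos_sub_one hβ0 hβ2π.le).mul_left (L / π ^ 2)
    -- `hasSum_pnat_iff` adds back the `n = 0` term, which is `0` since `1 / 0 = 0` in `ℝ`.
    have hpnat := (hasSum_pnat_iff (f := fun n : ℕ => L / π ^ 2 * (1 / (n : ℝ) ^ 2 *
      (cos (n * β) - 1)))).mpr (by simpa using hnat)
    exact hpnat.congr_fun fun m => by ring
  calc _ = ∏' m : ℕ+, exp (L / (π ^ 2 * (m : ℝ) ^ 2) * (cos (m * β) - 1)) :=
        tprod_congr fun m => tsum_poisson_mul_pow_eq_exp _ _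
    _ = exp (-(L / π ^ 2 * (β * (2 * π - β) / 4))) := hexponent.rexp.tprod_eq
    _ = _ := by
        rw [rpow_def_of_pos (div_pos (hδ.trans hδR) hδ), ← hL]
        congr 1
        field_simp
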